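/- arXiv:1405.2441 — 4 statements merged into one kernel-verified Lean document; each statement's English description precedes it below -/
import Mathlib

section
/- Fix n ≥ 1 and a subset S = {s_1, s_2, ..., s_k} of {1, ..., n-1} with s_1 < s_2 < ... < s_k, and set s_0 = 0 and s_{k+1} = n. Then the number of permutations π of {1, ..., n} whose set of ascent bottoms A(π) is contained in S equals ∏_{r=1}^{k+1} r^{s_r - s_{r-1}}. -/
/-- The `i`-th value (1-indexed) of the permutation `π` of `{1, …, n}`, i.e. `a_i ∈ {1, …, n}`.
For `i` outside `{1, …, n}` a junk value is returned. -/
def pval {n : ℕ} (π : Equiv.Perm (Fin n)) (i : ℕ) : ℕ :=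
  if h : i - 1 < n then (π ⟨i - 1, h⟩ : ℕ) + 1 else 0

/-- The set of ascent bottoms `A(π) = { a_i : i ∈ {1, …, n-1}, a_i < a_{i+1} }`. -/
def ascentBottoms {n : ℕ} (π : Equiv.Perm (Fin n)) : Finset ℕ :=
  ((Finset.Icc 1 (n - 1)).filter fun i => pval π i < pval π (i + 1)).image (pval π)

/-- For `S = {s_1 < s_2 < ⋯ < s_k} ⊆ {1, …, n-1}`, `sVal n S r` is `s_r`, with the
conventions `s_0 = 0` and `s_{k+1} = n`. -/
def sVal (n : ℕ) (S : Finset ℕ) (r : ℕ) : ℕ :=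
  if r = 0 then 0 else if r = S.card + 1 then n else (S.sort (· ≤ ·)).getD (r - 1) 0


/-!
Build the word `a₁ ⋯ aₙ` of a permutation by inserting `1, 2, …, n` in turn. The new letter
`m + 1` exceeds every letter already present, so it is never an ascent bottom itself, and
inserting it keeps every ascent bottom of the old word except that the letter immediately to its
left (if any) becomes one. Hence `m + 1` can go at the front or right after any letter of `S`
among `1, …, m`: there are `#(S ∩ [1, m]) + 1` choices, whatever the old word was. This number
equals `r` exactly for `s_{r-1} ≤ m < s_r`, which gives `∏ r ^ (s_r - s_{r-1})`.
-/

theorem List.permutations'Aux_eq_map_zip_inits_tails {α : Type*} (x : α) (l : List α) :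
    l.permutations'Aux x = (l.inits.zip l.tails).map fun p => p.1 ++ x :: p.2 := by
  induction l with
  | nil => simp
  | cons y t ih => simp [ih, List.zip_map_left]

theorem List.countP_inits_getLast?_mem {α : Type*} {S : Set α} [DecidablePred (· ∈ S)]
    (l : List α) :
    l.inits.countP (fun a => ∀ z ∈ a.getLast?, z ∈ S) = l.countP (· ∈ S) + 1 := by
  induction l using List.reverseRecOn with
  | nil => simp
  | append_singleton t y ih =>
    rw [List.inits_append, List.countP_append, ih]
    by_cases hy : y ∈ S <;> simp [hy]

theorem List.countP_range'_one (p : ℕ → Prop) [DecidablePred p] (h0 : ¬p 0) (m : ℕ) :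
    (List.range' 1 m).countP p = Nat.count p (m + 1) := by
  rw [Nat.count_succ', if_neg h0, add_zero, Nat.count, List.range'_eq_map_range, List.countP_map]
  simp [Function.comp_def, add_comm]

section AscentBottomsIn

variable {α : Type*} [LinearOrder α] {S : Set α}

variable (S) in
def AscentBottomsIn (l : List α) : Prop :=
  l.IsChain fun a b => a < b → a ∈ S

instance [DecidablePred (· ∈ S)] : DecidablePred (AscentBottomsIn S) := fun l =>
  inferInstanceAs (Decidable (l.IsChain _))

theorem ascentBottomsIn_append_cons {a b : List α} {x : α} (hx : ∀ y ∈ a ++ b, y < x) :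
    AscentBottomsIn S (a ++ x :: b) ↔
      AscentBottomsIn S (a ++ b) ∧ ∀ z ∈ a.getLast?, z ∈ S := by
  have hxb : AscentBottomsIn S (x :: b) ↔ AscentBottomsIn S b := by
    refine List.isChain_cons.trans (and_iff_right_of_imp fun _ y hy hxy => ?_)
    exact absurd (hx y (List.mem_append_right a (List.mem_of_mem_head? hy))) hxy.not_gt
  simp only [AscentBottomsIn, List.isChain_append] at hxb ⊢
  simp only [hxb, List.head?_cons, Option.mem_some_iff, forall_eq']
  constructor
  · rintro ⟨ha, hb, hlast⟩
    have hS : ∀ z ∈ a.getLast?, z ∈ S := fun z hz =>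
      hlast z hz (hx z (List.mem_append_left b (List.mem_of_mem_getLast? hz)))
    exact ⟨⟨ha, hb, fun z hz _ _ _ => hS z hz⟩, hS⟩
  · rintro ⟨⟨ha, hb, -⟩, hS⟩
    exact ⟨ha, hb, fun z hz _ => hS z hz⟩

variable [DecidablePred (· ∈ S)]

theorem countP_ascentBottomsIn_permutations'Aux {l : List α} {x : α} (hx : ∀ y ∈ l, y < x) :
    (l.permutations'Aux x).countP (AscentBottomsIn S ·) =
      if AscentBottomsIn S l then l.countP (· ∈ S) + 1 else 0 := by
  have key : ∀ p ∈ l.inits.zip l.tails, AscentBottomsIn S (p.1 ++ x :: p.2) ↔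
      AscentBottomsIn S l ∧ ∀ z ∈ p.1.getLast?, z ∈ S := by
    rintro ⟨a, b⟩ hp
    rw [List.mem_zip_inits_tails] at hp
    subst hp
    exact ascentBottomsIn_append_cons hx
  rw [List.permutations'Aux_eq_map_zip_inits_tails, List.countP_map]
  split_ifs with hl
  · calc _ = (l.inits.zip l.tails).countP (fun p => ∀ z ∈ p.1.getLast?, z ∈ S) :=
          List.countP_congr fun p hp => by simpa [hl] using key p hp
      _ = ((l.inits.zip l.tails).map Prod.fst).countP (fun a => ∀ z ∈ a.getLast?, z ∈ S) := by
          rw [List.countP_map]; rfl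
      _ = l.countP (· ∈ S) + 1 := by
          rw [List.map_fst_zip (by simp), List.countP_inits_getLast?_mem]
  · exact List.countP_eq_zero.mpr fun p hp => by simpa [hl] using key p hp

theorem countP_ascentBottomsIn_permutations'_cons {L : List α} {x : α} (hx : ∀ y ∈ L, y < x) :
    (x :: L).permutations'.countP (AscentBottomsIn S ·) =
      (L.countP (· ∈ S) + 1) * L.permutations'.countP (AscentBottomsIn S ·) := by
  have hfactor : ∀ l ∈ L.permutations', (l.permutations'Aux x).countP (AscentBottomsIn S ·) =
      if AscentBottomsIn S l then L.countP (· ∈ S) + 1 else 0 := fun l hl => by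
    have hperm := List.mem_permutations'.mp hl
    rw [countP_ascentBottomsIn_permutations'Aux fun y hy => hx y (hperm.subset hy),
      hperm.countP_eq]
  rw [List.permutations', List.countP_flatMap, Function.comp_def, List.map_congr_left hfactor]
  simp [List.sum_map_ite, List.countP_eq_length_filter, mul_comm]

end AscentBottomsIn

theorem countP_ascentBottomsIn_permutations'_range' (S : Set ℕ) [DecidablePred (· ∈ S)]
    (n : ℕ) :
    (List.range' 1 n).reverse.permutations'.countP (AscentBottomsIn S ·) =
      ∏ m ∈ Finset.range n, ((List.range' 1 m).countP (· ∈ S) + 1) := by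
  induction n with
  | zero => simp [AscentBottomsIn]
  | succ m ih =>
    have hlt : ∀ y ∈ (List.range' 1 m).reverse, y < m + 1 := by
      simp only [List.mem_reverse, List.mem_range'_1]; omega
    rw [List.range'_concat, List.reverse_append, List.reverse_singleton, List.singleton_append,
      one_mul, add_comm 1 m, countP_ascentBottomsIn_permutations'_cons hlt, ih,
      Finset.prod_range_succ, List.countP_reverse, mul_comm]

theorem Nat.lt_count_iff_nth_lt {p : ℕ → Prop} [DecidablePred p] (hp : (Set.ofPred p).Finite)
    {i a : ℕ} (hi : i < hp.toFinset.card) : i < Nat.count p a ↔ Nat.nth p i < a := by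
  refine ⟨Nat.nth_lt_of_lt_count, fun h => ?_⟩
  calc i < Nat.count p (Nat.nth p i + 1) := by
        rw [Nat.count_nth_succ fun hf => hi]; exact lt_add_one i
    _ ≤ Nat.count p a := Nat.count_monotone p h

section sVal

variable {n : ℕ} {S : Finset ℕ}

@[simp]
theorem sVal_zero : sVal n S 0 = 0 := rfl

@[simp]
theorem sVal_card_add_one : sVal n S (S.card + 1) = n := by
  simp [sVal]

theorem sVal_eq_nth {j : ℕ} (hj₁ : 1 ≤ j) (hj : j ≤ S.card) :
    sVal n S j = Nat.nth (· ∈ S) (j - 1) := by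
  rw [sVal, if_neg (by omega), if_neg (by omega),
    Nat.nth_eq_getD_sort (p := (· ∈ S)) S.finite_toSet]
  simp

theorem Nat.count_mem_le_card (a : ℕ) : Nat.count (· ∈ S) a ≤ S.card := by
  simpa using Nat.count_le_card (p := (· ∈ S)) S.finite_toSet a

theorem le_count_succ_iff_sVal_le {j m : ℕ} (hj : j ≤ S.card + 1) (hm : m < n) :
    j ≤ Nat.count (· ∈ S) (m + 1) ↔ sVal n S j ≤ m := by
  rcases Nat.eq_zero_or_pos j with rfl | hj₀
  · simp
  rcases hj.eq_or_lt with rfl | hj'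
  · have := Nat.count_mem_le_card (S := S) (m + 1)
    simp only [sVal_card_add_one]
    omega
  have := Nat.lt_count_iff_nth_lt (p := (· ∈ S)) S.finite_toSet (i := j - 1) (a := m + 1)
    (by simp only [SetLike.setOfPred_mem_eq, Set.toFinite_toFinset, Finset.toFinset_coe]; omega)
  rw [sVal_eq_nth hj₀ (by omega)]
  omega

variable (hS : ∀ s ∈ S, s < n)
include hS

theorem sVal_le {j : ℕ} (hj : j ≤ S.card + 1) : sVal n S j ≤ n := by
  rcases Nat.eq_zero_or_pos j with rfl | hj₀
  · simp
  rcases hj.eq_or_lt with rfl | hj'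
  · simp
  rw [sVal_eq_nth hj₀ (by omega)]
  refine (hS _ (Nat.nth_mem_of_lt_card (p := (· ∈ S)) S.finite_toSet ?_)).le
  simp only [SetLike.setOfPred_mem_eq, Set.toFinite_toFinset, Finset.toFinset_coe]
  omega

theorem filter_count_succ_eq_Ico {r : ℕ} (hr₁ : 1 ≤ r) (hr : r ≤ S.card + 1) :
    (Finset.range n).filter (fun m => Nat.count (· ∈ S) (m + 1) + 1 = r) =
      Finset.Ico (sVal n S (r - 1)) (sVal n S r) := by
  ext m
  simp only [Finset.mem_filter, Finset.mem_range, Finset.mem_Ico]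
  constructor
  · rintro ⟨hm, hcount⟩
    rw [← le_count_succ_iff_sVal_le (by omega) hm, ← not_le,
      ← le_count_succ_iff_sVal_le hr hm]
    omega
  · rintro ⟨hlo, hhi⟩
    have hm : m < n := hhi.trans_le (sVal_le hS hr)
    rw [← le_count_succ_iff_sVal_le (by omega) hm] at hlo
    rw [← not_le, ← le_count_succ_iff_sVal_le hr hm] at hhi
    exact ⟨hm, by omega⟩

theorem prod_range_count_succ_add_one :
    ∏ m ∈ Finset.range n, (Nat.count (· ∈ S) (m + 1) + 1) =
      ∏ r ∈ Finset.Icc 1 (S.card + 1), r ^ (sVal n S r - sVal n S (r - 1)) := by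
  rw [← Finset.prod_fiberwise_of_maps_to (t := Finset.Icc 1 (S.card + 1))
    (g := fun m => Nat.count (· ∈ S) (m + 1) + 1)
    (fun m _ => Finset.mem_Icc.mpr ⟨by omega, by simpa using Nat.count_mem_le_card (m + 1)⟩)]
  refine Finset.prod_congr rfl fun r hr => ?_
  rw [Finset.mem_Icc] at hr
  rw [Finset.prod_congr rfl fun m hm => (Finset.mem_filter.mp hm).2, Finset.prod_const,
    filter_count_succ_eq_Ico hS hr.1 hr.2, Nat.card_Ico]

end sVal

def oneLine {n : ℕ} (π : Equiv.Perm (Fin n)) : List ℕ :=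
  List.ofFn fun i => (π i : ℕ) + 1

theorem length_oneLine {n : ℕ} (π : Equiv.Perm (Fin n)) : (oneLine π).length = n :=
  List.length_ofFn

theorem getElem_oneLine {n : ℕ} (π : Equiv.Perm (Fin n)) (i : ℕ)
    (hi : i < (oneLine π).length) : (oneLine π)[i] = pval π (i + 1) := by
  simpa [oneLine, pval] using hi

theorem ascentBottoms_subset_iff_ascentBottomsIn_oneLine {n : ℕ} (π : Equiv.Perm (Fin n))
    (S : Finset ℕ) :
    ascentBottoms π ⊆ S ↔ AscentBottomsIn (S : Set ℕ) (oneLine π) := by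
  simp only [ascentBottoms, Finset.image_subset_iff, Finset.mem_filter, Finset.mem_Icc,
    AscentBottomsIn, List.isChain_iff_getElem, getElem_oneLine, length_oneLine, Finset.mem_coe]
  constructor
  · exact fun h i hi hlt => h (i + 1) ⟨⟨by omega, by omega⟩, hlt⟩
  · rintro h (_ | i) ⟨⟨hi, hin⟩, hlt⟩
    · omega
    · exact h i (by omega) hlt

theorem oneLine_injective (n : ℕ) : Function.Injective (oneLine (n := n)) := by
  intro π σ h
  ext i
  simpa [oneLine] using congrFun (List.ofFn_injective h) i

theorem oneLine_perm {n : ℕ} (π : Equiv.Perm (Fin n)) :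
    (oneLine π).Perm (List.range' 1 n).reverse := by
  have hid : List.ofFn (fun i : Fin n => (i : ℕ) + 1) = List.range' 1 n := by
    apply List.ext_getElem <;> simp [add_comm]
  exact (π.ofFn_comp_perm (fun i => (i : ℕ) + 1)).trans (hid ▸ (List.reverse_perm _).symm)

theorem card_ascentBottoms_subset_eq_countP (n : ℕ) (S : Finset ℕ) :
    Nat.card {π : Equiv.Perm (Fin n) // ascentBottoms π ⊆ S} =
      (List.range' 1 n).reverse.permutations'.countP (AscentBottomsIn (S : Set ℕ) ·) := by
  set L := (List.range' 1 n).reverse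
  have hnodup : L.permutations'.Nodup := (List.permutations_perm_permutations' L).nodup_iff.mp
    (List.nodup_permutations L (List.nodup_reverse.mpr List.nodup_range'))
  -- `oneLine` lands in `L.permutations'`, which also has `n!` elements, so it is onto.
  have himage : Finset.univ.image (oneLine (n := n)) = L.permutations'.toFinset := by
    refine Finset.eq_of_subset_of_card_le (fun l hl => ?_) ?_
    · obtain ⟨π, -, rfl⟩ := Finset.mem_image.mp hl
      exact List.mem_toFinset.mpr (List.mem_permutations'.mpr (oneLine_perm π))
    · rw [List.toFinset_card_of_nodup hnodup,
        ← (List.permutations_perm_permutations' L).length_eq,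
        List.length_permutations, Finset.card_image_of_injective _ (oneLine_injective n),
        Finset.card_univ, Fintype.card_perm, Fintype.card_fin]
      simp [L]
  rw [Nat.card_eq_fintype_card, Fintype.card_subtype,
    ← Finset.card_image_of_injective _ (oneLine_injective n)]
  simp_rw [ascentBottoms_subset_iff_ascentBottomsIn_oneLine]
  rw [← Finset.filter_image, himage, List.countP_eq_length_filter,
    ← List.toFinset_card_of_nodup (hnodup.filter _), List.toFinset_filter]
  simp

theorem card_ascentBottoms_subset_general (n : ℕ) (S : Finset ℕ)
    (hS : S ⊆ Finset.Icc 1 (n - 1)) :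
    Nat.card {π : Equiv.Perm (Fin n) // ascentBottoms π ⊆ S} =
      ∏ r ∈ Finset.Icc 1 (S.card + 1), r ^ (sVal n S r - sVal n S (r - 1)) := by
  have h0 : 0 ∉ S := fun h => by simpa using hS h
  have hlt : ∀ s ∈ S, s < n := fun s hs => by have := Finset.mem_Icc.mp (hS hs); omega
  rw [card_ascentBottoms_subset_eq_countP, countP_ascentBottomsIn_permutations'_range',
    ← prod_range_count_succ_add_one hlt]
  exact Finset.prod_congr rfl fun m _ => by simp [List.countP_range'_one _ h0]

/-- The number of permutations of `{1, …, n}` whose set of ascent bottoms is contained in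
`S = {s_1 < ⋯ < s_k} ⊆ {1, …, n-1}` equals `∏_{r=1}^{k+1} r^(s_r - s_{r-1})`,
where `s_0 = 0` and `s_{k+1} = n`. -/
theorem card_ascentBottoms_subset (n : ℕ) (hn : 1 ≤ n) (S : Finset ℕ)
    (hS : S ⊆ Finset.Icc 1 (n - 1)) :
    Nat.card {π : Equiv.Perm (Fin n) // ascentBottoms π ⊆ S} =
      ∏ r ∈ Finset.Icc 1 (S.card + 1), r ^ (sVal n S r - sVal n S (r - 1)) :=
  card_ascentBottoms_subset_general n S hS
end

section
/- Fix n ≥ 1 and a subset S = {s_1, ..., s_k} of {1, ..., n-1} with s_1 < ... < s_k. Then the number of permutations π of {1, ..., n} with A(π) ⊆ S equals the number of inversion tables b_1 b_2 ... b_n of length n whose set of distinct entries is contained in {0} ∪ S, i.e. dent(b) ⊆ {0, s_1, ..., s_k}. -/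
/-- `b : Fin n → ℕ` is an inversion table of length `n` if `b_i ≤ n - i` for every
(1-indexed) `i ∈ {1, …, n}`. -/
def IsInvTable {n : ℕ} (b : Fin n → ℕ) : Prop :=
  ∀ i : Fin n, b i ≤ n - ((i : ℕ) + 1)

/-- `dent b` is the set of distinct entries of `b`. -/
def dent {n : ℕ} (b : Fin n → ℕ) : Finset ℕ :=
  Finset.image b Finset.univ

/-! For each value `v`, record the value `j` at the last position left of `v` holding a smaller
value (as `j + 1`, with `0` if there is none). This code is an inversion table, and its nonzero
entries are exactly the ascent bottoms: the last smaller value before `v` is followed by a value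
`≥ v`, and an ascent `a_i < a_{i+1}` is recorded at `a_{i+1}`. The code is injective: by induction
on `w`, a value `u < w` lies left of `w` iff it lies weakly left of the value recorded at `w`, so
the code determines the relative order of all positions. As there are `n!` inversion tables, the
code is a bijection that matches the two families. -/

open Finset Function Nat

theorem lt_iff_lt_of_lt_of_gt {ι α : Type*} [LinearOrder ι] [LinearOrder α] {f g : ι → α}
    (hf : Injective f) (hg : Injective g) {a b : ι}
    (hlt : a < b → (f a < f b ↔ g a < g b)) (hgt : b < a → (f b < f a ↔ g b < g a)) :
    f a < f b ↔ g a < g b := by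
  rcases lt_trichotomy a b with hab | rfl | hab
  · exact hlt hab
  · simp
  · rw [← not_le, ← not_le, (hf.ne hab.ne).le_iff_lt, (hg.ne hab.ne).le_iff_lt, hgt hab]

theorem Equiv.eq_of_forall_lt_iff_lt {α β : Type*} [LinearOrder α] [WellFoundedLT α]
    {e e' : β ≃ α} (h : ∀ a b, e a < e b ↔ e' a < e' b) : e = e' := by
  let F : α ≃o α := ⟨e.symm.trans e', fun {a b} => by
    simpa [not_lt] using (h (e.symm b) (e.symm a)).not.symm⟩
  have hF : F = OrderIso.refl α := Subsingleton.elim _ _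
  ext x
  simpa [F] using (DFunLike.congr_fun hF (e x)).symm

theorem card_invTable (n : ℕ) : Nat.card {b : Fin n → ℕ // IsInvTable b} = n ! := by
  have hIic (m : ℕ) : Nat.card {k : ℕ // k ≤ m} = m + 1 := by
    change Nat.card (Set.Iic m) = _
    simp
  calc Nat.card {b : Fin n → ℕ // IsInvTable b}
      = ∏ i : Fin n, Nat.card {k : ℕ // k ≤ n - (i + 1)} := by
        rw [← Nat.card_pi, ← Nat.card_congr (Equiv.subtypePiEquivPi (β := fun _ : Fin n => ℕ)
          (p := fun i k => k ≤ n - ((i : ℕ) + 1)))]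
        rfl
    _ = ∏ i : Fin n, ((i : ℕ) + 1) :=
        Fintype.prod_equiv Fin.revPerm _ _ fun i => by simp [hIic, Fin.val_rev]
    _ = n ! := by
        rw [Fin.prod_univ_eq_prod_range (· + 1), Finset.prod_range_add_one_eq_factorial]

section Code

variable {n : ℕ}

def leftSmaller (π : Equiv.Perm (Fin n)) (v : Fin n) : Finset (Fin n) :=
  univ.filter fun p => p < π.symm v ∧ π p < v

def codeAt (π : Equiv.Perm (Fin n)) (v : Fin n) : ℕ :=
  if h : (leftSmaller π v).Nonempty then (π ((leftSmaller π v).max' h) : ℕ) + 1 else 0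

/-- Entry `i` is attached to the value `n - 1 - i` (both 0-indexed), which bounds it. -/
def code (π : Equiv.Perm (Fin n)) : Fin n → ℕ := fun i => codeAt π i.rev

variable (π : Equiv.Perm (Fin n))

theorem mem_leftSmaller {p v : Fin n} : p ∈ leftSmaller π v ↔ p < π.symm v ∧ π p < v := by
  simp [leftSmaller]

theorem codeAt_eq_succ_iff {v j : Fin n} :
    codeAt π v = j + 1 ↔ IsGreatest (leftSmaller π v : Set (Fin n)) (π.symm j) := by
  unfold codeAt
  split_ifs with h
  · rw [add_left_inj, Fin.val_inj, ← Equiv.eq_symm_apply]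
    exact ⟨fun hm => hm ▸ isGreatest_max' _ h, (isGreatest_max' _ h).unique⟩
  · exact iff_of_false (by simp) fun hg => h ⟨_, hg.1⟩

theorem exists_codeAt_eq_succ {p v : Fin n} (hp : p ∈ leftSmaller π v) :
    ∃ j : Fin n, codeAt π v = j + 1 :=
  ⟨π ((leftSmaller π v).max' ⟨p, hp⟩), dif_pos _⟩

theorem exists_codeAt_eq_succ_of_ne_zero {v : Fin n} (h : codeAt π v ≠ 0) :
    ∃ j : Fin n, codeAt π v = j + 1 := by
  unfold codeAt at h ⊢
  split_ifs at h ⊢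
  exacts [⟨_, rfl⟩, absurd rfl h]

theorem lt_of_codeAt_eq_succ {v j : Fin n} (h : codeAt π v = j + 1) : j < v := by
  simpa using ((mem_leftSmaller π).1 ((codeAt_eq_succ_iff π).1 h).1).2

theorem codeAt_le (v : Fin n) : codeAt π v ≤ v := by
  by_cases h : codeAt π v = 0
  · omega
  · obtain ⟨j, hj⟩ := exists_codeAt_eq_succ_of_ne_zero π h
    rw [hj]
    exact lt_of_codeAt_eq_succ π hj

theorem isInvTable_code : IsInvTable (code π) :=
  fun i => (codeAt_le π i.rev).trans_eq (Fin.val_rev i)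

theorem symm_lt_symm_iff_codeAt {u w : Fin n} (huw : u < w) :
    π.symm u < π.symm w ↔ ∃ j : Fin n, codeAt π w = j + 1 ∧ π.symm u ≤ π.symm j := by
  constructor
  · intro h
    have hu : π.symm u ∈ leftSmaller π w := (mem_leftSmaller π).2 ⟨h, by simpa using huw⟩
    obtain ⟨j, hj⟩ := exists_codeAt_eq_succ π hu
    exact ⟨j, hj, ((codeAt_eq_succ_iff π).1 hj).2 hu⟩
  · rintro ⟨j, hj, hle⟩
    exact hle.trans_lt ((mem_leftSmaller π).1 ((codeAt_eq_succ_iff π).1 hj).1).1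

theorem codeAt_injective : Injective (codeAt (n := n)) := by
  intro π π' h
  have hlt (w : Fin n) : ∀ u < w, (π.symm u < π.symm w ↔ π'.symm u < π'.symm w) := by
    induction w using WellFoundedLT.induction with
    | _ w ih =>
      intro u huw
      rw [symm_lt_symm_iff_codeAt π huw, symm_lt_symm_iff_codeAt π' huw, h]
      refine exists_congr fun j => and_congr_right fun hj => ?_
      have hjw := lt_of_codeAt_eq_succ π' hj
      simp only [← not_lt]
      exact not_congr <| lt_iff_lt_of_lt_of_gt π.symm.injective π'.symm.injective
        (fun hju => ih u huw j hju) (fun huj => ih j hjw u huj)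
  exact Equiv.symm_bijective.injective <| Equiv.eq_of_forall_lt_iff_lt fun a b =>
    lt_iff_lt_of_lt_of_gt π.symm.injective π'.symm.injective (hlt b a) (hlt a b)

theorem code_injective : Injective (code (n := n)) := fun π π' h =>
  codeAt_injective <| funext fun v => by simpa [code] using congrFun h v.rev

theorem pval_succ (p : Fin n) : pval π (p + 1) = π p + 1 := by
  simp [pval]

theorem mem_ascentBottoms_iff {x : ℕ} :
    x ∈ ascentBottoms π ↔ ∃ p q : Fin n, (q : ℕ) = p + 1 ∧ π p < π q ∧ x = π p + 1 := by
  simp only [ascentBottoms, mem_image, mem_filter, mem_Icc]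
  constructor
  · rintro ⟨i, ⟨⟨hi, hin⟩, hlt⟩, rfl⟩
    obtain ⟨k, rfl⟩ : ∃ k, i = k + 1 := ⟨i - 1, by omega⟩
    have hkn : k + 1 < n := by omega
    have hp := pval_succ π ⟨k, by omega⟩
    have hq := pval_succ π ⟨k + 1, hkn⟩
    refine ⟨⟨k, by omega⟩, ⟨k + 1, hkn⟩, rfl, ?_, hp⟩
    rw [hp, hq] at hlt
    exact Nat.succ_lt_succ_iff.1 hlt
  · rintro ⟨p, q, hpq, hlt, rfl⟩
    refine ⟨p + 1, ⟨⟨by omega, by omega⟩, ?_⟩, pval_succ π p⟩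
    rw [pval_succ, show (p : ℕ) + 1 + 1 = q + 1 by omega, pval_succ]
    exact Nat.succ_lt_succ hlt

theorem codeAt_mem_ascentBottoms {v : Fin n} (h : codeAt π v ≠ 0) :
    codeAt π v ∈ ascentBottoms π := by
  obtain ⟨j, hj⟩ := exists_codeAt_eq_succ_of_ne_zero π h
  obtain ⟨hmem, hmax⟩ := (codeAt_eq_succ_iff π).1 hj
  obtain ⟨hpos, hjv⟩ := (mem_leftSmaller π).1 hmem
  set p := π.symm j
  let q : Fin n := ⟨p + 1, by omega⟩
  have hvq : v ≤ π q := by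
    by_contra! hqv
    have hqv' : q ≠ π.symm v := fun e => by simp [e] at hqv
    have hq : q ∈ leftSmaller π v :=
      (mem_leftSmaller π).2 ⟨lt_of_le_of_ne (Nat.succ_le_of_lt hpos) hqv', hqv⟩
    exact absurd (hmax hq) (by simp [q, Fin.le_def])
  rw [hj, mem_ascentBottoms_iff]
  exact ⟨p, q, rfl, hjv.trans_le hvq, by simp [p]⟩

theorem codeAt_eq_of_ascent {p q : Fin n} (hpq : (q : ℕ) = p + 1) (h : π p < π q) :
    codeAt π (π q) = π p + 1 := by
  rw [codeAt_eq_succ_iff, Equiv.symm_apply_apply]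
  have hpq' : p < π.symm (π q) := by
    rw [Equiv.symm_apply_apply, Fin.lt_def]
    omega
  refine ⟨(mem_leftSmaller π).2 ⟨hpq', h⟩, fun r hr => ?_⟩
  have := ((mem_leftSmaller π).1 hr).1
  simp only [Equiv.symm_apply_apply, Fin.lt_def] at this
  rw [Fin.le_def]
  omega

theorem erase_dent_code : (dent (code π)).erase 0 = ascentBottoms π := by
  ext x
  have hdent : x ∈ dent (code π) ↔ ∃ v, codeAt π v = x := by
    simp only [dent, mem_image, mem_univ, true_and]
    exact ⟨fun ⟨i, hi⟩ => ⟨i.rev, hi⟩, fun ⟨v, hv⟩ => ⟨v.rev, by simpa [code] using hv⟩⟩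
  rw [mem_erase, hdent]
  constructor
  · rintro ⟨hx, v, rfl⟩
    exact codeAt_mem_ascentBottoms π hx
  · intro hx
    obtain ⟨p, q, hpq, hlt, rfl⟩ := (mem_ascentBottoms_iff π).1 hx
    exact ⟨Nat.succ_ne_zero _, π q, codeAt_eq_of_ascent π hpq hlt⟩

end Code

noncomputable def codeEquiv (n : ℕ) : Equiv.Perm (Fin n) ≃ {b : Fin n → ℕ // IsInvTable b} :=
  Equiv.ofBijective (fun π => ⟨code π, isInvTable_code π⟩) <| by
    have : Finite {b : Fin n → ℕ // IsInvTable b} :=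
      Nat.finite_of_card_ne_zero (by rw [card_invTable]; positivity)
    refine Injective.bijective_of_nat_card_le
      (fun π π' h => code_injective (congrArg Subtype.val h)) ?_
    rw [card_invTable, Nat.card_perm, Nat.card_fin]

theorem card_ascentBottoms_subset_eq_card_invTables_general (n : ℕ) (S : Finset ℕ) :
    Nat.card {π : Equiv.Perm (Fin n) // ascentBottoms π ⊆ S} =
      Nat.card {b : Fin n → ℕ // IsInvTable b ∧ dent b ⊆ insert 0 S} :=
  Nat.card_congr <| ((codeEquiv n).subtypeEquiv fun π => by
    rw [show ((codeEquiv n π) : Fin n → ℕ) = code π from rfl, subset_insert_iff,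
      erase_dent_code]).trans (Equiv.subtypeSubtypeEquivSubtypeInter _ _)

/-- The number of permutations of `{1, …, n}` whose set of ascent bottoms is contained in
`S ⊆ {1, …, n-1}` equals the number of inversion tables of length `n` whose set of
distinct entries is contained in `{0} ∪ S`. -/
theorem card_ascentBottoms_subset_eq_card_invTables (n : ℕ) (hn : 1 ≤ n) (S : Finset ℕ)
    (hS : S ⊆ Finset.Icc 1 (n - 1)) :
    Nat.card {π : Equiv.Perm (Fin n) // ascentBottoms π ⊆ S} =
      Nat.card {b : Fin n → ℕ // IsInvTable b ∧ dent b ⊆ insert 0 S} :=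
  card_ascentBottoms_subset_eq_card_invTables_general n S
end

section
/- Fix n ≥ 1 and a subset S = {s_1, ..., s_k} of {1, ..., n-1} with s_1 < ... < s_k. Then the number of permutations π of {1, ..., n} with A(π) = S equals the number of inversion tables b_1 b_2 ... b_n of length n whose set of distinct entries is exactly {0} ∪ S, i.e. dent(b) = {0, s_1, ..., s_k}. -/
/-!
Insert the values `1, 2, …, n` one at a time into the word `0`, placing `v` immediately after
`c v ∈ {0, …, v - 1}`, where `c v = b_{n+1-v}`. Since `v` exceeds everything already present,
this makes `c v` an ascent bottom and changes no other ascent, so the ascent bottoms of the final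
word `0 a₁ ⋯ aₙ` are exactly `dent b`; dropping the leading `0` gives
`{0} ∪ A(a₁ ⋯ aₙ) = dent b`. The insertion can be undone (erase `n`, read off its
predecessor, recurse), and inversion tables, like permutations, number `n!`, so this is a
bijection.
-/

namespace List

variable {α : Type*}

section InsertAfter

variable [DecidableEq α] {c x : α} {w : List α}

def insertAfter (c x : α) : List α → List α
  | [] => [x]
  | y :: t => if y = c then y :: x :: t else y :: insertAfter c x t

theorem insertAfter_cons (c x y : α) (t : List α) :
    insertAfter c x (y :: t) = y :: if y = c then x :: t else insertAfter c x t := by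
  simp only [insertAfter]; split <;> rfl

theorem perm_insertAfter (c x : α) : ∀ w : List α, insertAfter c x w ~ x :: w
  | [] => .refl _
  | y :: t => by
    rw [insertAfter_cons]
    split
    · exact .swap x y t
    · exact ((perm_insertAfter c x t).cons y).trans (.swap x y t)

theorem head?_insertAfter (c x y : α) (t : List α) :
    (insertAfter c x (y :: t)).head? = some y := by
  rw [insertAfter_cons, head?_cons]

theorem erase_insertAfter (hx : x ∉ w) : (insertAfter c x w).erase x = w := by
  induction w with
  | nil => simp [insertAfter]
  | cons y t ih =>
    have hyx : y ≠ x := fun h => hx (h ▸ mem_cons_self)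
    rw [insertAfter_cons, erase_cons_tail (by simpa using hyx)]
    split
    · rw [erase_cons_head]
    · rw [ih (fun h => hx (mem_cons_of_mem y h))]

theorem insertAfter_ne_cons (hc : c ∈ w) (hx : x ∉ w) : insertAfter c x w ≠ x :: w := by
  obtain ⟨y, t, rfl⟩ := exists_cons_of_ne_nil (ne_nil_of_mem hc)
  intro h
  have := congrArg head? h
  rw [head?_insertAfter, head?_cons, Option.some_inj] at this
  exact hx (this ▸ mem_cons_self)

theorem insertAfter_left_inj {c' : α} (hc : c ∈ w) (hc' : c' ∈ w) (hx : x ∉ w) :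
    insertAfter c x w = insertAfter c' x w ↔ c = c' := by
  refine ⟨fun h => ?_, fun h => h ▸ rfl⟩
  induction w with
  | nil => simp at hc
  | cons y t ih =>
    have hxt : x ∉ t := fun h => hx (mem_cons_of_mem y h)
    rw [insertAfter_cons, insertAfter_cons, cons_inj_right] at h
    rw [mem_cons] at hc hc'
    split_ifs at h with hyc hyc' hyc'
    · exact hyc ▸ hyc'
    · exact absurd h.symm (insertAfter_ne_cons (hc'.resolve_left (Ne.symm hyc')) hxt)
    · exact absurd h (insertAfter_ne_cons (hc.resolve_left (Ne.symm hyc)) hxt)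
    · exact ih (hc.resolve_left (Ne.symm hyc)) (hc'.resolve_left (Ne.symm hyc')) hxt h

end InsertAfter

section AscentBottoms

variable [LinearOrder α]

def ascentBottoms : List α → Finset α
  | y :: z :: t => if y < z then insert y (ascentBottoms (z :: t)) else ascentBottoms (z :: t)
  | _ => ∅

@[simp] theorem ascentBottoms_nil : ([] : List α).ascentBottoms = ∅ := rfl

@[simp] theorem ascentBottoms_singleton (y : α) : [y].ascentBottoms = ∅ := rfl

theorem ascentBottoms_cons_cons (y z : α) (t : List α) :
    (y :: z :: t).ascentBottoms =
      if y < z then insert y (z :: t).ascentBottoms else (z :: t).ascentBottoms := rfl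

theorem ascentBottoms_cons_of_forall_lt {x : α} {w : List α} (h : ∀ y ∈ w, y < x) :
    (x :: w).ascentBottoms = w.ascentBottoms := by
  cases w with
  | nil => rfl
  | cons z t => rw [ascentBottoms_cons_cons, if_neg (h z mem_cons_self).not_gt]

theorem insert_ascentBottoms_cons (y : α) (t : List α) :
    insert y (y :: t).ascentBottoms = insert y t.ascentBottoms := by
  cases t with
  | nil => rfl
  | cons z t => rw [ascentBottoms_cons_cons]; split_ifs <;> simp

theorem ascentBottoms_insertAfter {c x : α} {w : List α} (hc : c ∈ w)
    (hx : ∀ y ∈ w, y < x) :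
    (insertAfter c x w).ascentBottoms = insert c w.ascentBottoms := by
  induction w with
  | nil => simp at hc
  | cons y t ih =>
    rw [insertAfter_cons]
    split
    · rename_i hyc
      subst hyc
      rw [ascentBottoms_cons_cons, if_pos (hx y mem_cons_self),
        ascentBottoms_cons_of_forall_lt (fun z hz => hx z (mem_cons_of_mem y hz)),
        insert_ascentBottoms_cons]
    · rename_i hyc
      have hct : c ∈ t := (mem_cons.mp hc).resolve_left (Ne.symm hyc)
      obtain ⟨z, t, rfl⟩ := exists_cons_of_ne_nil (ne_nil_of_mem hct)
      have ih := ih hct (fun u hu => hx u (mem_cons_of_mem y hu))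
      rw [insertAfter_cons] at ih ⊢
      rw [ascentBottoms_cons_cons, ih, ascentBottoms_cons_cons]
      split_ifs <;> simp [Finset.insert_comm]

theorem mem_ascentBottoms {a : α} : ∀ {l : List α},
    a ∈ l.ascentBottoms ↔ ∃ j, ∃ h : j + 1 < l.length, l[j] < l[j + 1] ∧ l[j] = a
  | [] | [_] => by simp
  | y :: z :: t => by
    have hhead :
        a ∈ (y :: z :: t).ascentBottoms ↔ y < z ∧ y = a ∨ a ∈ (z :: t).ascentBottoms := by
      rw [ascentBottoms_cons_cons]; split_ifs with h <;> simp [h, eq_comm]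
    rw [hhead, mem_ascentBottoms]
    constructor
    · rintro (⟨hyz, rfl⟩ | ⟨j, hj, hlt, rfl⟩)
      · exact ⟨0, by simp, hyz, rfl⟩
      · exact ⟨j + 1, by simpa using hj, hlt, rfl⟩
    · rintro ⟨_ | j, hj, hlt, rfl⟩
      · exact Or.inl ⟨hlt, rfl⟩
      · exact Or.inr ⟨j, by simpa using hj, hlt, rfl⟩

end AscentBottoms

end List

open scoped List

section InsertionWord

variable (c : ℕ → ℕ)

/-- The word `0 a₁ ⋯ aₙ` obtained from `[0]` by inserting `v = 1, …, n` in turn right after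
`c v`; the leading `0` makes `c v = 0` mean insertion at the front of `a₁ ⋯ aₙ`. -/
def insertionWord : ℕ → List ℕ
  | 0 => [0]
  | n + 1 => (insertionWord n).insertAfter (c (n + 1)) (n + 1)

theorem insertionWord_perm_range : ∀ n, insertionWord c n ~ List.range (n + 1)
  | 0 => .refl _
  | n + 1 => by
    rw [List.range_succ]
    exact (List.perm_insertAfter _ _ _).trans
      (((insertionWord_perm_range n).cons _).trans (List.perm_append_singleton _ _).symm)

theorem zero_cons_tail_insertionWord : ∀ n, 0 :: (insertionWord c n).tail = insertionWord c n
  | 0 => rfl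
  | n + 1 => List.cons_head?_tail <| by
    rw [insertionWord, ← zero_cons_tail_insertionWord n, List.head?_insertAfter]; rfl

theorem zero_cons_tail_insertionWord_perm_range (n : ℕ) :
    0 :: (insertionWord c n).tail ~ List.range (n + 1) := by
  rw [zero_cons_tail_insertionWord]; exact insertionWord_perm_range c n

variable {c} {n : ℕ}

theorem succ_notMem_insertionWord : n + 1 ∉ insertionWord c n := by
  simp [(insertionWord_perm_range c n).mem_iff]

theorem mem_insertionWord_of_le {a : ℕ} (ha : a ≤ n) : a ∈ insertionWord c n := by
  simp [(insertionWord_perm_range c n).mem_iff]; omega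

theorem ascentBottoms_insertionWord (hc : ∀ v ∈ Finset.Icc 1 n, c v < v) :
    (insertionWord c n).ascentBottoms = (Finset.Icc 1 n).image c := by
  induction n with
  | zero => rfl
  | succ n ih =>
    have hcn : c (n + 1) ≤ n := Nat.le_of_lt_succ (hc (n + 1) (by simp))
    rw [insertionWord, List.ascentBottoms_insertAfter (mem_insertionWord_of_le hcn),
      ih (fun v hv => hc v (Finset.Icc_subset_Icc_right n.le_succ hv)),
      ← Finset.image_insert, Finset.insert_Icc_right_eq_Icc_add_one (by omega)]
    intro y hy
    simpa [(insertionWord_perm_range c n).mem_iff, Nat.lt_succ_iff] using hy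

theorem eqOn_of_insertionWord_eq {c' : ℕ → ℕ} (hc : ∀ v ∈ Finset.Icc 1 n, c v < v)
    (hc' : ∀ v ∈ Finset.Icc 1 n, c' v < v) (h : insertionWord c n = insertionWord c' n) :
    Set.EqOn c c' (Finset.Icc 1 n) := by
  induction n with
  | zero => simp
  | succ n ih =>
    rw [insertionWord, insertionWord] at h
    have hw : insertionWord c n = insertionWord c' n := by
      simpa only [List.erase_insertAfter succ_notMem_insertionWord]
        using congrArg (·.erase (n + 1)) h
    have hlast : c (n + 1) = c' (n + 1) := by
      rw [← hw] at h
      refine (List.insertAfter_left_inj (mem_insertionWord_of_le ?_) (mem_insertionWord_of_le ?_)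
        succ_notMem_insertionWord).mp h
      · exact Nat.le_of_lt_succ (hc (n + 1) (by simp))
      · exact Nat.le_of_lt_succ (hc' (n + 1) (by simp))
    have hsub := Finset.Icc_subset_Icc_right (a := 1) n.le_succ
    intro v hv
    rcases eq_or_ne v (n + 1) with rfl | hvn
    · exact hlast
    · exact ih (fun u hu => hc u (hsub hu)) (fun u hu => hc' u (hsub hu)) hw
        (by simp at hv ⊢; omega)

end InsertionWord

section PermOfWord

variable {n : ℕ} {w : List ℕ}

theorem length_eq_of_perm_range (hw : 0 :: w ~ List.range (n + 1)) : w.length = n := by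
  simpa using hw.length_eq

theorem mem_Icc_of_perm_range (hw : 0 :: w ~ List.range (n + 1)) {a : ℕ} (ha : a ∈ w) :
    1 ≤ a ∧ a ≤ n := by
  have h0 : a ≠ 0 := fun h =>
    (List.nodup_cons.mp (hw.nodup_iff.mpr List.nodup_range)).1 (h ▸ ha)
  have := List.mem_range.mp (hw.mem_iff.mp (List.mem_cons_of_mem 0 ha))
  omega

/-- `0 :: w ~ List.range (n + 1)` says that `w` lists `1, …, n` in some order. -/
noncomputable def permOfWord (w : List ℕ) (hw : 0 :: w ~ List.range (n + 1)) :
    Equiv.Perm (Fin n) :=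
  have hlen := length_eq_of_perm_range hw
  have hmem (i : Fin n) := mem_Icc_of_perm_range hw (List.getElem_mem (i.2.trans_eq hlen.symm))
  Equiv.ofBijective (fun i => ⟨w[(i : ℕ)] - 1, by have := hmem i; omega⟩)
    (Finite.injective_iff_bijective.mp fun i j hij => by
      have := hmem i; have := hmem j
      have hnd := (List.nodup_cons.mp (hw.nodup_iff.mpr List.nodup_range)).2
      exact Fin.ext ((hnd.getElem_inj_iff).mp (by simp only [Fin.mk.injEq] at hij; omega)))

variable (hw : 0 :: w ~ List.range (n + 1))

theorem pval_permOfWord {j : ℕ} (hj : j < n) :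
    pval (permOfWord w hw) (j + 1) = w[j]'(hj.trans_eq (length_eq_of_perm_range hw).symm) := by
  have := mem_Icc_of_perm_range hw
    (List.getElem_mem (hj.trans_eq (length_eq_of_perm_range hw).symm))
  simp only [pval, add_tsub_cancel_right, hj, dif_pos, permOfWord, Equiv.ofBijective_apply]
  omega

theorem permOfWord_injective {w' : List ℕ} (hw' : 0 :: w' ~ List.range (n + 1))
    (h : permOfWord w hw = permOfWord w' hw') : w = w' := by
  refine List.ext_getElem ((length_eq_of_perm_range hw).trans
    (length_eq_of_perm_range hw').symm) fun j hj hj' => ?_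
  have hjn : j < n := hj.trans_eq (length_eq_of_perm_range hw)
  rw [← pval_permOfWord hw hjn, ← pval_permOfWord hw' hjn, h]

theorem insert_zero_ascentBottoms_permOfWord (hn : 1 ≤ n) :
    insert 0 (ascentBottoms (permOfWord w hw)) = (0 :: w).ascentBottoms := by
  ext a
  simp only [Finset.mem_insert, ascentBottoms, Finset.mem_image, Finset.mem_filter,
    Finset.mem_Icc, List.mem_ascentBottoms, List.length_cons, length_eq_of_perm_range hw]
  constructor
  · rintro (rfl | ⟨i, ⟨⟨hi1, hin⟩, hlt⟩, rfl⟩)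
    · have := mem_Icc_of_perm_range hw
        (List.getElem_mem (n := 0) (by rw [length_eq_of_perm_range hw]; omega))
      exact ⟨0, by omega, this.1, rfl⟩
    · obtain ⟨j, rfl⟩ : ∃ j, i = j + 1 := ⟨i - 1, by omega⟩
      rw [pval_permOfWord hw (by omega), pval_permOfWord hw (by omega)] at hlt
      rw [pval_permOfWord hw (by omega)]
      exact ⟨j + 1, by omega, hlt, rfl⟩
  · rintro ⟨_ | j, hj, hlt, rfl⟩
    · exact Or.inl rfl
    · refine Or.inr ⟨j + 1, ⟨⟨by omega, by omega⟩, ?_⟩, ?_⟩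
      · rw [pval_permOfWord hw (by omega), pval_permOfWord hw (by omega)]; exact hlt
      · rw [pval_permOfWord hw (by omega)]; rfl

end PermOfWord

theorem zero_notMem_ascentBottoms {n : ℕ} (π : Equiv.Perm (Fin n)) : 0 ∉ ascentBottoms π := by
  simp only [ascentBottoms, Finset.mem_image, Finset.mem_filter, Finset.mem_Icc, not_exists,
    not_and]
  intro i ⟨⟨_, hi⟩, _⟩
  rw [pval, dif_pos (by omega)]
  exact Nat.succ_ne_zero _

section InvTable

variable {n : ℕ} {b : Fin n → ℕ}

/-- `insertionPoint b v = b_{n+1-v}` (1-indexed), which turns `b_i ≤ n - i` into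
`insertionPoint b v < v`. -/
def insertionPoint (b : Fin n → ℕ) (v : ℕ) : ℕ :=
  if h : 1 ≤ v ∧ v ≤ n then b ⟨n - v, by omega⟩ else 0

theorem IsInvTable.insertionPoint_lt (hb : IsInvTable b) :
    ∀ v ∈ Finset.Icc 1 n, insertionPoint b v < v := by
  intro v hv
  rw [Finset.mem_Icc] at hv
  have := hb ⟨n - v, by omega⟩
  rw [insertionPoint, dif_pos hv]
  simp only at this
  omega

theorem image_insertionPoint (b : Fin n → ℕ) :
    (Finset.Icc 1 n).image (insertionPoint b) = dent b := by
  ext a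
  simp only [Finset.mem_image, Finset.mem_Icc, dent, Finset.mem_univ, true_and]
  constructor
  · rintro ⟨v, hv, rfl⟩
    exact ⟨_, by rw [insertionPoint, dif_pos hv]⟩
  · rintro ⟨i, rfl⟩
    refine ⟨n - i, by omega, ?_⟩
    rw [insertionPoint, dif_pos (by omega)]
    congr
    omega

theorem eq_of_insertionPoint_eq {b' : Fin n → ℕ}
    (h : Set.EqOn (insertionPoint b) (insertionPoint b') (Finset.Icc 1 n)) : b = b' := by
  funext i
  have hv : 1 ≤ n - i ∧ n - i ≤ n := by omega
  have := h (Finset.mem_coe.mpr (Finset.mem_Icc.mpr hv))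
  rw [insertionPoint, insertionPoint, dif_pos hv, dif_pos hv] at this
  convert this using 2 <;> ext <;> simp <;> omega

noncomputable def tablePerm (b : Fin n → ℕ) : Equiv.Perm (Fin n) :=
  permOfWord _ (zero_cons_tail_insertionWord_perm_range (insertionPoint b) n)

theorem insert_zero_ascentBottoms_tablePerm (hn : 1 ≤ n) (hb : IsInvTable b) :
    insert 0 (ascentBottoms (tablePerm b)) = dent b := by
  rw [tablePerm, insert_zero_ascentBottoms_permOfWord _ hn, zero_cons_tail_insertionWord,
    ascentBottoms_insertionWord hb.insertionPoint_lt, image_insertionPoint]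

theorem tablePerm_injOn : Set.InjOn (tablePerm (n := n)) {b | IsInvTable b} := by
  intro b hb b' hb' h
  have hw : insertionWord (insertionPoint b) n = insertionWord (insertionPoint b') n := by
    rw [← zero_cons_tail_insertionWord, permOfWord_injective _ _ h, zero_cons_tail_insertionWord]
  exact eq_of_insertionPoint_eq
    (eqOn_of_insertionWord_eq hb.insertionPoint_lt hb'.insertionPoint_lt hw)

end InvTable

def invTableEquivPi (n : ℕ) :
    {b : Fin n → ℕ // IsInvTable b} ≃ ∀ i : Fin n, Fin (n - i) where
  toFun b i := ⟨b.1 i, by have := b.2 i; omega⟩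
  invFun f := ⟨fun i => f i, fun i => by
    have := (f i).2; show (f i : ℕ) ≤ n - (i + 1); omega⟩

theorem card_invTables (n : ℕ) : Nat.card {b : Fin n → ℕ // IsInvTable b} = n.factorial := by
  rw [Nat.card_congr (invTableEquivPi n), Nat.card_pi]
  simp only [Nat.card_eq_fintype_card, Fintype.card_fin]
  rw [Fin.prod_univ_eq_prod_range (n - ·), ← Finset.prod_range_reflect,
    ← Finset.prod_range_add_one_eq_factorial]
  refine Finset.prod_congr rfl fun j hj => ?_
  rw [Finset.mem_range] at hj
  omega

noncomputable def invTablePermEquiv (n : ℕ) :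
    {b : Fin n → ℕ // IsInvTable b} ≃ Equiv.Perm (Fin n) :=
  Equiv.ofBijective (fun b => tablePerm b.1) <| (Nat.bijective_iff_injective_and_card _).mpr
    ⟨fun b b' h => Subtype.ext (tablePerm_injOn b.2 b'.2 h),
      by rw [card_invTables, Nat.card_perm, Nat.card_fin]⟩

/-- The number of permutations of `{1, …, n}` whose set of ascent bottoms is exactly
`S ⊆ {1, …, n-1}` equals the number of inversion tables of length `n` whose set of
distinct entries is exactly `{0} ∪ S`. -/
theorem card_ascentBottoms_eq_eq_card_invTables (n : ℕ) (hn : 1 ≤ n) (S : Finset ℕ)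
    (hS : S ⊆ Finset.Icc 1 (n - 1)) :
    Nat.card {π : Equiv.Perm (Fin n) // ascentBottoms π = S} =
      Nat.card {b : Fin n → ℕ // IsInvTable b ∧ dent b = insert 0 S} := by
  have h0S : 0 ∉ S := fun h => by simpa using hS h
  have hdent (b : {b : Fin n → ℕ // IsInvTable b}) :
      dent b.1 = insert 0 S ↔ ascentBottoms (tablePerm b.1) = S := by
    rw [← insert_zero_ascentBottoms_tablePerm hn b.2]
    refine ⟨fun h => ?_, fun h => h ▸ rfl⟩
    simpa [Finset.erase_insert, zero_notMem_ascentBottoms, h0S] using congrArg (·.erase 0) h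
  rw [← Nat.card_congr ((invTablePermEquiv n).subtypeEquiv hdent)]
  exact Nat.card_congr (Equiv.subtypeSubtypeEquivSubtypeInter IsInvTable (dent · = insert 0 S))
end

section
/- For every n ≥ 1, the number of pairs (π, τ) of permutations of {1, ..., n} with A(τ) ⊆ D(π) equals the number of pairs (π, τ) of permutations of {1, ..., n} with D(π) ⊆ A(τ). -/
/-- The descent set `D(π) = { i ∈ {1, …, n-1} : a_i > a_{i+1} }`. -/
def descentSet {n : ℕ} (π : Equiv.Perm (Fin n)) : Finset ℕ :=
  (Finset.Icc 1 (n - 1)).filter fun i => pval π (i + 1) < pval π i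

/-!
Both conditions are exchanged by a bijection `(π, τ) ↦ (π', τ')` that replaces `D(π)` and `A(τ)`
by their complements in `{1, …, n-1}` reflected through `i ↦ n - i`; reflected complementation
reverses inclusions. For descents, `π'` is `π` read backwards. For ascent bottoms, encode the word
`a_1 ⋯ a_n` by its cyclic successor map `σ : 0 ↦ a_1 ↦ ⋯ ↦ a_n ↦ 0` on `{0, …, n}`, so that `A(τ)`
is the set of `v ≠ 0` with `v < σ v`. Conjugating `σ` by `v ↦ n - v` turns these excedances into
their reflected complement, and the conjugate is again the successor map of a word: in word terms,
`α n β ↦ φ(β) n φ(α)` with `φ(v) = n - v`.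
-/

open Equiv Equiv.Perm Finset

lemma Equiv.Perm.decomposeFin_fst {n : ℕ} (x : Perm (Fin (n + 1))) :
    (decomposeFin x).1 = x 0 := by
  simp [decomposeFin]

lemma finRotate_pow_val_apply_zero {n : ℕ} (i : Fin (n + 1)) :
    (finRotate (n + 1) ^ (i : ℕ)) 0 = i := by
  rw [coe_pow, ← finCycle_eq_finRotate_iterate, finCycle_apply, zero_add]

lemma eq_one_of_commute_finRotate {n : ℕ} {c : Perm (Fin (n + 1))}
    (hc : Commute c (finRotate (n + 1))) (h0 : c 0 = 0) : c = 1 := by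
  refine Equiv.ext fun i => ?_
  have := congr($((hc.pow_right i.val).eq) 0)
  simpa [Perm.mul_apply, h0, finRotate_pow_val_apply_zero] using this

section Words

variable {n : ℕ}

/-- The word `0 a_1 ⋯ a_n` of `τ`, with values shifted up by one and position `i` holding `a_i`. -/
def padZero (τ : Perm (Fin n)) : Perm (Fin (n + 1)) := decomposeFin.symm (0, τ)

@[simp] lemma padZero_zero (τ : Perm (Fin n)) : padZero τ 0 = 0 :=
  decomposeFin_symm_apply_zero _ _

@[simp] lemma padZero_succ (τ : Perm (Fin n)) (i : Fin n) : padZero τ i.succ = (τ i).succ := by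
  simp [padZero, decomposeFin_symm_apply_succ]

@[simp] lemma padZero_symm_zero (τ : Perm (Fin n)) : (padZero τ).symm 0 = 0 :=
  (padZero τ).symm_apply_eq.2 (padZero_zero τ).symm

lemma padZero_injective : Function.Injective (padZero (n := n)) := fun τ τ' h => by
  simpa using decomposeFin.symm.injective h

lemma padZero_decomposeFin_snd {x : Perm (Fin (n + 1))} (hx : x 0 = 0) :
    padZero (decomposeFin x).2 = x := by
  conv_rhs => rw [← decomposeFin.symm_apply_apply x]
  rw [padZero, ← hx, ← decomposeFin_fst]

lemma pval_eq_padZero (τ : Perm (Fin n)) {i : Fin (n + 1)} (hi : i ≠ 0) :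
    pval τ i = padZero τ i := by
  obtain ⟨j, rfl⟩ := Fin.exists_succ_eq.2 hi
  simp [pval]

lemma pval_succ_eq_padZero_finRotate (τ : Perm (Fin n)) {i : Fin (n + 1)}
    (hi : i ≠ Fin.last n) : pval τ (i + 1) = padZero τ (finRotate (n + 1) i) := by
  have h := coe_finRotate_of_ne_last hi
  rw [← h, pval_eq_padZero τ (Fin.ne_of_val_ne (by rw [h]; simp))]

def cyclicSucc (τ : Perm (Fin n)) : Perm (Fin (n + 1)) :=
  padZero τ * finRotate (n + 1) * (padZero τ)⁻¹

lemma cyclicSucc_padZero (τ : Perm (Fin n)) (i : Fin (n + 1)) :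
    cyclicSucc τ (padZero τ i) = padZero τ (finRotate (n + 1) i) := by
  simp [cyclicSucc, Perm.mul_apply]

lemma cyclicSucc_apply_ne (τ : Perm (Fin n)) {v : Fin (n + 1)} (hv : v ≠ 0) :
    cyclicSucc τ v ≠ v := by
  obtain ⟨i, rfl⟩ := (padZero τ).surjective v
  rw [cyclicSucc_padZero, (padZero τ).injective.ne_iff]
  intro h
  have := congrArg Fin.val h
  rw [coe_finRotate] at this
  split_ifs at this with hi
  · obtain rfl : n = 0 := by simp [hi] at this; omega
    exact hv (Fin.fin_one_eq_zero _)
  · omega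

lemma cyclicSucc_injective : Function.Injective (cyclicSucc (n := n)) := fun τ τ' h => by
  refine padZero_injective (inv_mul_eq_one.1 (eq_one_of_commute_finRotate ?_ (by simp)))
  unfold cyclicSucc at h
  calc (padZero τ)⁻¹ * padZero τ' * finRotate (n + 1)
      = (padZero τ)⁻¹ * (padZero τ' * finRotate (n + 1) * (padZero τ')⁻¹) * padZero τ' := by
        group
    _ = finRotate (n + 1) * ((padZero τ)⁻¹ * padZero τ') := by rw [← h]; group

/-- Multiplying by `finRotate ^ m`, with `m` the position of `n`, makes the conjugated word start
with `0` again without changing its cyclic successor map. -/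
def flipAscents (τ : Perm (Fin n)) : Perm (Fin n) :=
  (decomposeFin
    (Fin.revPerm * padZero τ * finRotate (n + 1) ^ ((padZero τ)⁻¹ (Fin.last n) : ℕ))).2

lemma padZero_flipAscents (τ : Perm (Fin n)) :
    padZero (flipAscents τ) =
      Fin.revPerm * padZero τ * finRotate (n + 1) ^ ((padZero τ)⁻¹ (Fin.last n) : ℕ) := by
  refine padZero_decomposeFin_snd (x := Fin.revPerm * padZero τ * _) ?_
  simp [Perm.mul_apply, finRotate_pow_val_apply_zero]

lemma cyclicSucc_flipAscents (τ : Perm (Fin n)) :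
    cyclicSucc (flipAscents τ) = Fin.revPerm * cyclicSucc τ * Fin.revPerm⁻¹ := by
  rw [cyclicSucc, padZero_flipAscents, cyclicSucc]
  group

lemma flipAscents_involutive : Function.Involutive (flipAscents (n := n)) := fun τ => by
  refine cyclicSucc_injective ?_
  have hrev : (Fin.revPerm : Perm (Fin (n + 1))) * Fin.revPerm = 1 := Equiv.ext Fin.rev_rev
  rw [cyclicSucc_flipAscents, cyclicSucc_flipAscents]
  calc Fin.revPerm * (Fin.revPerm * cyclicSucc τ * Fin.revPerm⁻¹) * Fin.revPerm⁻¹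
      = Fin.revPerm * Fin.revPerm * cyclicSucc τ * (Fin.revPerm * Fin.revPerm)⁻¹ := by group
    _ = cyclicSucc τ := by rw [hrev]; group

def nonzeroExcedances (σ : Perm (Fin (n + 1))) : Finset ℕ :=
  (univ.filter fun v => v ≠ 0 ∧ v < σ v).image Fin.val

def reflectedComplement (n : ℕ) (X : Finset ℕ) : Finset ℕ :=
  (Icc 1 (n - 1)).filter fun i => n - i ∉ X

lemma subset_iff_reflectedComplement_subset {X Y : Finset ℕ} (hX : X ⊆ Icc 1 (n - 1)) :
    X ⊆ Y ↔ reflectedComplement n Y ⊆ reflectedComplement n X := by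
  simp only [reflectedComplement, subset_iff, mem_filter, mem_Icc]
  refine ⟨fun h i hi => ⟨hi.1, fun hX' => hi.2 (h hX')⟩, fun h i hi => ?_⟩
  have hi' := mem_Icc.1 (hX hi)
  by_contra hiY
  exact (@h (n - i) ⟨⟨by omega, by omega⟩, by rwa [show n - (n - i) = i by omega]⟩).2
    (by rwa [show n - (n - i) = i by omega])

lemma nonzeroExcedances_subset_Icc (σ : Perm (Fin (n + 1))) :
    nonzeroExcedances σ ⊆ Icc 1 (n - 1) := by
  simp only [nonzeroExcedances, subset_iff, mem_image, mem_filter, mem_univ, true_and, mem_Icc]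
  rintro _ ⟨v, ⟨hv0, hvσ⟩, rfl⟩
  have := Fin.val_ne_zero_iff.2 hv0
  have := (σ v).is_lt
  have := Fin.lt_def.1 hvσ
  omega

lemma nonzeroExcedances_revPerm_conj (σ : Perm (Fin (n + 1))) (hσ : ∀ v, v ≠ 0 → σ v ≠ v) :
    nonzeroExcedances (Fin.revPerm * σ * Fin.revPerm⁻¹) =
      reflectedComplement n (nonzeroExcedances σ) := by
  ext k
  simp only [nonzeroExcedances, reflectedComplement, mem_image, mem_filter, mem_univ, true_and,
    mem_Icc, Perm.mul_apply, Perm.inv_def, Fin.revPerm_symm, Fin.revPerm_apply]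
  constructor
  · rintro ⟨v, ⟨hv0, hv⟩, rfl⟩
    rw [Fin.lt_rev_iff] at hv
    have hv0' := Fin.val_ne_zero_iff.2 hv0
    have hrev := Fin.val_rev v
    have hlt := Fin.lt_def.1 hv
    refine ⟨⟨by omega, by omega⟩, ?_⟩
    rintro ⟨u, ⟨-, hu⟩, hu'⟩
    obtain rfl : u = v.rev := Fin.ext (by omega)
    exact lt_asymm hu hv
  · rintro ⟨⟨hk1, hk2⟩, hk⟩
    refine ⟨⟨k, by omega⟩, ⟨Fin.ne_of_val_ne (by simp; omega), ?_⟩, rfl⟩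
    rw [Fin.lt_rev_iff]
    have hu0 : Fin.rev ⟨k, by omega⟩ ≠ (0 : Fin (n + 1)) := Fin.ne_of_val_ne (by simp; omega)
    refine lt_of_le_of_ne (not_lt.1 fun h => hk ⟨_, ⟨hu0, h⟩, ?_⟩) (hσ _ hu0)
    simp

lemma ascentBottoms_eq_nonzeroExcedances (τ : Perm (Fin n)) :
    ascentBottoms τ = nonzeroExcedances (cyclicSucc τ) := by
  ext k
  simp only [ascentBottoms, nonzeroExcedances, mem_image, mem_filter, mem_univ, true_and, mem_Icc]
  constructor
  · rintro ⟨i, ⟨⟨hi1, hi2⟩, hasc⟩, rfl⟩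
    have hj0 : (⟨i, by omega⟩ : Fin (n + 1)) ≠ 0 := Fin.ne_of_val_ne (by simp; omega)
    have hjl : (⟨i, by omega⟩ : Fin (n + 1)) ≠ Fin.last n := Fin.ne_of_val_ne (by simp; omega)
    rw [pval_eq_padZero τ hj0, pval_succ_eq_padZero_finRotate τ hjl] at hasc
    rw [pval_eq_padZero τ hj0]
    refine ⟨_, ⟨?_, ?_⟩, rfl⟩
    · rwa [← padZero_zero τ, (padZero τ).injective.ne_iff]
    · rwa [cyclicSucc_padZero, ← Fin.val_fin_lt]
  · rintro ⟨v, ⟨hv0, hv⟩, rfl⟩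
    obtain ⟨j, rfl⟩ := (padZero τ).surjective v
    rw [cyclicSucc_padZero] at hv
    have hj0 : j ≠ 0 := by rintro rfl; simp at hv0
    have hjl : j ≠ Fin.last n := by rintro rfl; simp at hv
    have hj1 := Fin.val_ne_zero_iff.2 hj0
    have hjn := Fin.val_lt_last hjl
    refine ⟨j, ⟨⟨by omega, by omega⟩, ?_⟩, pval_eq_padZero τ hj0⟩
    rwa [pval_eq_padZero τ hj0, pval_succ_eq_padZero_finRotate τ hjl, Fin.val_fin_lt]

lemma ascentBottoms_subset_Icc (τ : Perm (Fin n)) : ascentBottoms τ ⊆ Icc 1 (n - 1) :=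
  ascentBottoms_eq_nonzeroExcedances τ ▸ nonzeroExcedances_subset_Icc _

lemma ascentBottoms_flipAscents (τ : Perm (Fin n)) :
    ascentBottoms (flipAscents τ) = reflectedComplement n (ascentBottoms τ) := by
  rw [ascentBottoms_eq_nonzeroExcedances, ascentBottoms_eq_nonzeroExcedances,
    cyclicSucc_flipAscents, nonzeroExcedances_revPerm_conj _ fun _ => cyclicSucc_apply_ne τ]

lemma pval_mul_revPerm (π : Perm (Fin n)) {i : ℕ} (hi1 : 1 ≤ i) (hin : i ≤ n) :
    pval (π * Fin.revPerm) i = pval π (n + 1 - i) := by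
  rw [pval, pval, dif_pos (by omega), dif_pos (by omega), Perm.mul_apply]
  congr 3
  ext
  simp only [Fin.revPerm_apply, Fin.val_rev]
  omega

lemma pval_ne_pval_add_one (π : Perm (Fin n)) {i : ℕ} (hi1 : 1 ≤ i) (hin : i < n) :
    pval π i ≠ pval π (i + 1) := by
  rw [pval, pval, dif_pos (by omega), dif_pos (by omega)]
  intro h
  have := congrArg Fin.val (π.injective (Fin.ext (Nat.add_right_cancel h)))
  simp at this
  omega

lemma descentSet_mul_revPerm (π : Perm (Fin n)) :
    descentSet (π * Fin.revPerm) = reflectedComplement n (descentSet π) := by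
  ext i
  simp only [descentSet, reflectedComplement, mem_filter, mem_Icc]
  refine and_congr_right fun ⟨hi1, hin⟩ => ?_
  rw [pval_mul_revPerm π (by omega) (by omega), pval_mul_revPerm π hi1 (by omega),
    show n + 1 - (i + 1) = n - i by omega, show n + 1 - i = n - i + 1 by omega]
  have := pval_ne_pval_add_one π (i := n - i) (by omega) (by omega)
  constructor
  · rintro h ⟨-, h'⟩
    omega
  · intro h
    have : ¬pval π (n - i + 1) < pval π (n - i) := fun h' => h ⟨⟨by omega, by omega⟩, h'⟩
    omega

end Words

theorem card_pairs_ascentBottoms_subset_descentSet_eq_card_pairs_descentSet_subset_general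
    (n : ℕ) :
    Nat.card {p : Equiv.Perm (Fin n) × Equiv.Perm (Fin n) //
        ascentBottoms p.2 ⊆ descentSet p.1} =
      Nat.card {p : Equiv.Perm (Fin n) × Equiv.Perm (Fin n) //
        descentSet p.1 ⊆ ascentBottoms p.2} := by
  refine Nat.card_congr (Equiv.subtypeEquiv
    ((Equiv.mulRight Fin.revPerm).prodCongr flipAscents_involutive.toPerm) fun p => ?_)
  simp only [Equiv.prodCongr_apply, Prod.map, Equiv.coe_mulRight, Function.Involutive.coe_toPerm,
    descentSet_mul_revPerm, ascentBottoms_flipAscents]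
  exact subset_iff_reflectedComplement_subset (ascentBottoms_subset_Icc p.2)

/-- The number of pairs `(π, τ)` of permutations of `{1, …, n}` with `A(τ) ⊆ D(π)` equals
the number of pairs `(π, τ)` of permutations of `{1, …, n}` with `D(π) ⊆ A(τ)`. -/
theorem card_pairs_ascentBottoms_subset_descentSet_eq_card_pairs_descentSet_subset
    (n : ℕ) (hn : 1 ≤ n) :
    Nat.card {p : Equiv.Perm (Fin n) × Equiv.Perm (Fin n) //
        ascentBottoms p.2 ⊆ descentSet p.1} =
      Nat.card {p : Equiv.Perm (Fin n) × Equiv.Perm (Fin n) //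
        descentSet p.1 ⊆ ascentBottoms p.2} :=
  card_pairs_ascentBottoms_subset_descentSet_eq_card_pairs_descentSet_subset_general n
end
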